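/- (Model construction for K_nD and D_nD) Let L be K_nD or D_nD, let P ⊆ 𝒫 be finite, p ∈ P, k ≥ 0, and δ ∈ D^P_k(L). For every L-model (M′,s′), if M′,s′ ⊨ δ^p, then there is an L-model (M,s) such that M,s ⊨ δ and (M,s) ≅^col_p (M′,s′). -/

import Mathlib

/-!
Common framework: multi-agent epistemic modal logic with distributed knowledge.
Agents are `Fin n`, atoms are natural numbers.
-/

namespace DKLogic

/-- Formulas of the language `L_D`: atoms, negation, conjunction, disjunction and the
distributed-knowledge modality `D_B` for nonempty sets `B` of agents (together with the
constants `⊤`/`⊥`, which the paper uses as the empty conjunction/disjunction). -/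
inductive Formula (n : ℕ) : Type
  | top : Formula n
  | bot : Formula n
  | atom : ℕ → Formula n
  | neg : Formula n → Formula n
  | and : Formula n → Formula n → Formula n
  | or : Formula n → Formula n → Formula n
  | D : {B : Finset (Fin n) // B.Nonempty} → Formula n → Formula n

namespace Formula

/-- Modal depth of a formula. -/
def depth {n : ℕ} : Formula n → ℕ
  | top => 0
  | bot => 0
  | atom _ => 0
  | neg φ => depth φ
  | and φ ψ => max (depth φ) (depth ψ)
  | or φ ψ => max (depth φ) (depth ψ)
  | D _ φ => depth φ + 1

/-- The atoms occurring in a formula. -/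
def atoms {n : ℕ} : Formula n → Finset ℕ
  | top => ∅
  | bot => ∅
  | atom q => {q}
  | neg φ => atoms φ
  | and φ ψ => atoms φ ∪ atoms ψ
  | or φ ψ => atoms φ ∪ atoms ψ
  | D _ φ => atoms φ

end Formula

/-- A Kripke model over world type `W` with `n` agents. -/
structure KModel (n : ℕ) (W : Type) where
  R : Fin n → W → W → Prop
  V : W → Set ℕ

/-- The distributed accessibility relation `R_B = ⋂_{i ∈ B} R_i`. -/
def KModel.RB {n : ℕ} {W : Type} (M : KModel n W) (B : Finset (Fin n)) (s t : W) : Prop :=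
  ∀ i ∈ B, M.R i s t

/-- Satisfaction. -/
def Sat {n : ℕ} {W : Type} (M : KModel n W) : W → Formula n → Prop
  | _, .top => True
  | _, .bot => False
  | s, .atom q => q ∈ M.V s
  | s, .neg φ => ¬ Sat M s φ
  | s, .and φ ψ => Sat M s φ ∧ Sat M s ψ
  | s, .or φ ψ => Sat M s φ ∨ Sat M s ψ
  | s, .D B φ => ∀ t : W, M.RB B.1 s t → Sat M t φ

/-- Seriality of a relation. -/
def Serial {W : Type} (R : W → W → Prop) : Prop := ∀ x, ∃ y, R x y

/-- Euclideanness of a relation. -/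
def Euclidean {W : Type} (R : W → W → Prop) : Prop := ∀ x y z, R x y → R x z → R y z

/-- The six modal systems. -/
inductive MSys : Type
  | K | D | T | K45 | KD45 | S5

/-- `L`-models: frame conditions on each accessibility relation for each system. -/
def IsModel {n : ℕ} {W : Type} : MSys → KModel n W → Prop
  | .K, _ => True
  | .D, M => ∀ i, Serial (M.R i)
  | .T, M => ∀ i, Reflexive (M.R i)
  | .K45, M => ∀ i, Transitive (M.R i) ∧ Euclidean (M.R i)
  | .KD45, M => ∀ i, Serial (M.R i) ∧ Transitive (M.R i) ∧ Euclidean (M.R i)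
  | .S5, M => ∀ i, Reflexive (M.R i) ∧ Transitive (M.R i) ∧ Euclidean (M.R i)

/-- Semantic consequence over `L`-models. -/
def Entails {n : ℕ} (L : MSys) (φ ψ : Formula n) : Prop :=
  ∀ (W : Type) (M : KModel n W), IsModel L M → ∀ s : W, Sat M s φ → Sat M s ψ

/-- Semantic equivalence over `L`-models. -/
def EquivL {n : ℕ} (L : MSys) (φ ψ : Formula n) : Prop :=
  Entails L φ ψ ∧ Entails L ψ φ

/-- `L`-satisfiability. -/
def SatL {n : ℕ} (L : MSys) (φ : Formula n) : Prop :=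
  ∃ (W : Type) (M : KModel n W) (s : W), IsModel L M ∧ Sat M s φ

/-- Collective `p`-bisimulation between two pointed models. -/
def CollPBisim {n : ℕ} {W W' : Type} (M : KModel n W) (s : W) (M' : KModel n W') (s' : W')
    (p : ℕ) : Prop :=
  ∃ ρ : W → W' → Prop, ρ s s' ∧
    ∀ u u', ρ u u' →
      ((∀ q : ℕ, q ≠ p → (q ∈ M.V u ↔ q ∈ M'.V u')) ∧
       (∀ B : Finset (Fin n), B.Nonempty → ∀ v, M.RB B u v → ∃ v', M'.RB B u' v' ∧ ρ v v') ∧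
       (∀ B : Finset (Fin n), B.Nonempty → ∀ v', M'.RB B u' v' → ∃ v, M.RB B u v ∧ ρ v v'))

/-- `ψ` is a result of forgetting `p` in `φ` in system `L`
(written `dforget_L(φ,p) ≡_L ψ` in the paper). -/
def IsForget {n : ℕ} (L : MSys) (φ : Formula n) (p : ℕ) (ψ : Formula n) : Prop :=
  ψ.atoms ⊆ φ.atoms.erase p ∧
  (∀ (W W' : Type) (M : KModel n W) (M' : KModel n W') (s : W) (s' : W'),
      IsModel L M → IsModel L M' → Sat M s φ → CollPBisim M s M' s' p → Sat M' s' ψ) ∧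
  (∀ (W' : Type) (M' : KModel n W') (s' : W'),
      IsModel L M' → Sat M' s' ψ →
      ∃ (W : Type) (M : KModel n W) (s : W), IsModel L M ∧ Sat M s φ ∧ CollPBisim M s M' s' p)

/-- `L` is closed under forgetting: `dforget_L(φ,p)` exists (as an `L`-satisfiable formula)
for every `L`-satisfiable `φ` and every atom `p`. -/
def ClosedUnderForgetting {n : ℕ} (L : MSys) : Prop :=
  ∀ (φ : Formula n) (p : ℕ), SatL L φ → ∃ ψ : Formula n, SatL L ψ ∧ IsForget L φ p ψ

/-- `ψ` is a uniform interpolant of `φ` in `L` over `P \ {p}`. -/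
def IsUI {n : ℕ} (L : MSys) (P : Finset ℕ) (p : ℕ) (φ ψ : Formula n) : Prop :=
  SatL L ψ ∧ ψ.atoms ⊆ P.erase p ∧
  ∀ χ : Formula n, p ∉ χ.atoms → (Entails L φ χ ↔ Entails L ψ χ)

/-- The uniform interpolation property for the system `L`. -/
def HasUIP {n : ℕ} (L : MSys) : Prop :=
  ∀ (P : Finset ℕ) (p : ℕ) (φ : Formula n),
    p ∈ P → φ.atoms ⊆ P → SatL L φ → ∃ ψ : Formula n, IsUI L P p φ ψ

/-! ### Canonical formulas -/

/-- Big conjunction of a list of formulas (`⊤` for the empty list). -/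
def bigAnd {n : ℕ} : List (Formula n) → Formula n
  | [] => .top
  | φ :: l => .and φ (bigAnd l)

/-- Big disjunction of a list of formulas (`⊥` for the empty list). -/
def bigOr {n : ℕ} : List (Formula n) → Formula n
  | [] => .bot
  | φ :: l => .or φ (bigOr l)

/-- An injective numerical code of formulas, used to fix a canonical ordering. -/
def fcode {n : ℕ} : Formula n → ℕ
  | .top => Nat.pair 0 0
  | .bot => Nat.pair 1 0
  | .atom q => Nat.pair 2 q
  | .neg φ => Nat.pair 3 (fcode φ)
  | .and φ ψ => Nat.pair 4 (Nat.pair (fcode φ) (fcode ψ))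
  | .or φ ψ => Nat.pair 5 (Nat.pair (fcode φ) (fcode ψ))
  | .D B φ => Nat.pair 6 (Nat.pair (B.1.sum fun i => 2 ^ (i : ℕ)) (fcode φ))

/-- Insert a formula into a strictly `fcode`-sorted list (dropping duplicates). -/
def insertF {n : ℕ} (φ : Formula n) : List (Formula n) → List (Formula n)
  | [] => [φ]
  | ψ :: l =>
      if fcode φ < fcode ψ then φ :: ψ :: l
      else if fcode φ = fcode ψ then ψ :: l
      else ψ :: insertF φ l

/-- The canonical (sorted, duplicate-free) list representing the set of formulas in `l`. -/
def normList {n : ℕ} (l : List (Formula n)) : List (Formula n) := l.foldr insertF []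

/-- The minterm of `P` that is positive exactly on `S`. -/
def minterm {n : ℕ} (P S : Finset ℕ) : Formula n :=
  bigAnd ((P.sort (· ≤ ·)).map fun q =>
    if q ∈ S then Formula.atom q else Formula.neg (Formula.atom q))

/-- The subset of `Fin n` whose characteristic bits are those of `m`. -/
def natToFinset (n m : ℕ) : Finset (Fin n) :=
  Finset.univ.filter fun i => m.testBit (i : ℕ)

/-- A canonical enumeration of all nonempty subsets of the agent set. -/
def neSubsets (n : ℕ) : List {B : Finset (Fin n) // B.Nonempty} :=
  ((List.range (2 ^ n)).map (natToFinset n)).filterMap fun B =>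
    if h : B.Nonempty then some ⟨B, h⟩ else none

/-- `∇_B Φ = D_B (⋁Φ) ∧ ⋀_{φ ∈ Φ} ¬ D_B ¬ φ`. -/
def nabla {n : ℕ} (B : {B : Finset (Fin n) // B.Nonempty}) (Φ : List (Formula n)) : Formula n :=
  Formula.and (Formula.D B (bigOr Φ))
    (bigAnd (Φ.map fun φ => Formula.neg (Formula.D B (Formula.neg φ))))

/-- Underlying data of a d-canonical formula: a set of (positive) atoms together with,
for every set `B` of agents, a list of successor data. -/
inductive CData (n : ℕ) : Type
  | mk (S : Finset ℕ) (succ : Finset (Fin n) → List (CData n)) : CData n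

/-- The positive-atom component. -/
def CData.S {n : ℕ} : CData n → Finset ℕ
  | mk S _ => S

/-- The `B`-successor data. -/
def CData.succ {n : ℕ} : CData n → Finset (Fin n) → List (CData n)
  | mk _ f => f

/-- The d-canonical formula of depth `k` over `P` determined by the data `d`:
`δ_0 ∧ ⋀_{B} ∇_B Φ_B`. -/
def toFormula {n : ℕ} (P : Finset ℕ) : ℕ → CData n → Formula n
  | 0, d => minterm P (d.S ∩ P)
  | (k+1), d =>
      Formula.and (minterm P (d.S ∩ P))
        (bigAnd ((neSubsets n).map fun B =>
          nabla B (normList ((d.succ B.1).map fun c => toFormula P k c))))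

/-- `D^P_k`: the set of d-canonical formulas of depth `k` over `P`. -/
def DP {n : ℕ} (P : Finset ℕ) (k : ℕ) : Set (Formula n) := Set.range (toFormula P k)

/-- `R_B(δ)` for `δ` the level-`k` canonical formula with data `d`:
the set of `B`-successor canonical formulas (of level `k - 1`). -/
def RBset {n : ℕ} (P : Finset ℕ) (k : ℕ) (d : CData n) (B : Finset (Fin n)) :
    Set (Formula n) :=
  {φ | ∃ c ∈ d.succ B, φ = toFormula P (k - 1) c}

/-- One pruning step `δ ↦ δ^↓` on data (first argument: the level of the input). -/
def downD {n : ℕ} : ℕ → CData n → CData n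
  | 0, d => d
  | 1, d => CData.mk d.S (fun _ => [])
  | (k+2), d => CData.mk d.S (fun B => (d.succ B).map fun c => downD (k+1) c)

/-- `l`-fold pruning `δ ↦ δ^{↓l}` on data (first argument: the level of the input). -/
def downIter {n : ℕ} : ℕ → ℕ → CData n → CData n
  | _, 0, d => d
  | k, (l+1), d => downIter (k-1) l (downD k d)

/-- Truncation `δ ↦ δ^{↑l}` on data (first argument: the level of the input). -/
def upD {n : ℕ} : ℕ → ℕ → CData n → CData n
  | _, 0, d => CData.mk d.S (fun _ => [])
  | 0, (_+1), d => d
  | (k+1), (l+1), d => CData.mk d.S (fun B => (d.succ B).map fun c => upD k l c)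

/-- The canonical formula `δ` of level `k` with data `d`. -/
def cf {n : ℕ} (P : Finset ℕ) (k : ℕ) (d : CData n) : Formula n := toFormula P k d

/-- `δ^{↓l}` (a canonical formula of level `k - l`). -/
def cfDown {n : ℕ} (P : Finset ℕ) (k l : ℕ) (d : CData n) : Formula n :=
  toFormula P (k - l) (downIter k l d)

/-- `δ^{↑l}` (a canonical formula of level `min k l`). -/
def cfUp {n : ℕ} (P : Finset ℕ) (k l : ℕ) (d : CData n) : Formula n :=
  toFormula P (min k l) (upD k l d)

/-- Literal elimination: `φ^p` replaces every occurrence of `¬p` by `⊤` and subsequently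
every remaining occurrence of `p` by `⊤`. -/
def elim {n : ℕ} (p : ℕ) : Formula n → Formula n
  | .top => .top
  | .bot => .bot
  | .atom q => if q = p then .top else .atom q
  | .neg (.atom q) => if q = p then .top else .neg (.atom q)
  | .neg φ => .neg (elim p φ)
  | .and φ ψ => .and (elim p φ) (elim p ψ)
  | .or φ ψ => .or (elim p φ) (elim p ψ)
  | .D B φ => .D B (elim p φ)

/-!
Take a model `N, t` of `δ` and build a product of `N` and `M'` whose worlds are pairs `(t, u)`
such that `t` satisfies a canonical formula `γ` of the remaining depth and `u` satisfies `γ^p`;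
`p` is read off `N` and every other atom off `M'`. Canonical formulas of equal depth are mutually
exclusive, so the `∇_B`-conjuncts of `γ` at `t` and of `γ^p` at `u` pair the successors of `t`
with those of `u`, and by induction on the depth the product satisfies `δ` at `(t, s')`. The
projection to the `M'`-component is a collective `p`-bisimulation. Once the depth is used up the
product continues as a copy of `M'`, so seriality is preserved.
-/

section Semantics

variable {n : ℕ} {W : Type} {M : KModel n W} {w : W}

lemma sat_bigAnd {l : List (Formula n)} : Sat M w (bigAnd l) ↔ ∀ φ ∈ l, Sat M w φ := by
  induction l with
  | nil => simp [bigAnd, Sat]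
  | cons φ l ih => simp [bigAnd, Sat, ih]

lemma sat_bigOr {l : List (Formula n)} : Sat M w (bigOr l) ↔ ∃ φ ∈ l, Sat M w φ := by
  induction l with
  | nil => simp [bigOr, Sat]
  | cons φ l ih => simp [bigOr, Sat, ih]

lemma sat_nabla {B : {B : Finset (Fin n) // B.Nonempty}} {Φ : List (Formula n)} :
    Sat M w (nabla B Φ) ↔
      (∀ v, M.RB B.1 w v → ∃ φ ∈ Φ, Sat M v φ) ∧ ∀ φ ∈ Φ, ∃ v, M.RB B.1 w v ∧ Sat M v φ := by
  simp [nabla, Sat, sat_bigOr, sat_bigAnd]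

lemma sat_minterm {P S : Finset ℕ} :
    Sat M w (minterm P S) ↔ ∀ q ∈ P, (q ∈ M.V w ↔ q ∈ S) := by
  simp only [minterm, sat_bigAnd, List.forall_mem_map, Finset.mem_sort]
  refine forall₂_congr fun q _ => ?_
  split_ifs with hq <;> simp [Sat, hq]

end Semantics

section Elimination

variable {n : ℕ} {p : ℕ}

lemma elim_bigAnd {l : List (Formula n)} : elim p (bigAnd l) = bigAnd (l.map (elim p)) := by
  induction l with
  | nil => rfl
  | cons φ l ih => simp [bigAnd, elim, ih]

lemma elim_bigOr {l : List (Formula n)} : elim p (bigOr l) = bigOr (l.map (elim p)) := by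
  induction l with
  | nil => rfl
  | cons φ l ih => simp [bigOr, elim, ih]

lemma sat_elim_minterm {W : Type} {M : KModel n W} {w : W} {P S : Finset ℕ} :
    Sat M w (elim p (minterm P S)) ↔ ∀ q ∈ P, q ≠ p → (q ∈ M.V w ↔ q ∈ S) := by
  simp only [minterm, elim_bigAnd, List.map_map, sat_bigAnd, List.forall_mem_map,
    Finset.mem_sort, Function.comp_apply]
  refine forall₂_congr fun q _ => ?_
  by_cases hqp : q = p <;> split_ifs with hq <;> simp [elim, Sat, hq, hqp]

lemma elim_nabla {B : {B : Finset (Fin n) // B.Nonempty}} {Φ : List (Formula n)}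
    (hΦ : ∀ φ ∈ Φ, elim p (.neg φ) = .neg (elim p φ)) :
    elim p (nabla B Φ) = nabla B (Φ.map (elim p)) := by
  simp only [nabla, elim, elim_bigOr, elim_bigAnd, List.map_map]
  congr 2
  exact List.map_congr_left fun φ hφ => by simp [elim, hΦ φ hφ]

lemma elim_neg_toFormula {P : Finset ℕ} {l : ℕ} {c : CData n} :
    elim p (.neg (toFormula P l c)) = .neg (elim p (toFormula P l c)) := by
  cases l with
  | zero =>
    -- a minterm is `⊤` or a conjunction, never a bare atom
    simp only [toFormula, minterm]
    generalize List.map _ _ = l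
    cases l <;> rfl
  | succ l => rfl

end Elimination

section NormList

variable {n : ℕ}

lemma mem_of_mem_insertF {φ x : Formula n} {l : List (Formula n)} (h : x ∈ insertF φ l) :
    x = φ ∨ x ∈ l := by
  induction l with
  | nil => simpa [insertF] using h
  | cons ψ l ih =>
    unfold insertF at h
    split_ifs at h <;> grind

lemma mem_of_mem_normList {x : Formula n} {l : List (Formula n)} (h : x ∈ normList l) :
    x ∈ l := by
  induction l with
  | nil => simp [normList] at h
  | cons φ l ih =>
    rcases mem_of_mem_insertF (l := normList l) h with rfl | h
    · exact List.mem_cons_self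
    · exact List.mem_cons_of_mem _ (ih h)

lemma pairwise_insertF {φ : Formula n} {l : List (Formula n)}
    (h : l.Pairwise (fcode · < fcode ·)) : (insertF φ l).Pairwise (fcode · < fcode ·) := by
  induction l with
  | nil => simp [insertF]
  | cons ψ l ih =>
    rw [List.pairwise_cons] at h
    unfold insertF
    split_ifs with hlt heq
    · refine List.pairwise_cons.2 ⟨fun x hx => ?_, List.pairwise_cons.2 h⟩
      rcases List.mem_cons.1 hx with rfl | hx
      · exact hlt
      · exact hlt.trans (h.1 x hx)
    · exact List.pairwise_cons.2 h
    · refine List.pairwise_cons.2 ⟨fun x hx => ?_, ih h.2⟩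
      rcases mem_of_mem_insertF hx with rfl | hx
      · omega
      · exact h.1 x hx

lemma pairwise_normList {l : List (Formula n)} :
    (normList l).Pairwise (fcode · < fcode ·) := by
  induction l with
  | nil => simp [normList]
  | cons φ l ih => exact pairwise_insertF ih

lemma normList_eq_of_subset {l₁ l₂ : List (Formula n)} (h₁ : normList l₁ ⊆ normList l₂)
    (h₂ : normList l₂ ⊆ normList l₁) : normList l₁ = normList l₂ := by
  have : Std.Irrefl fun φ ψ : Formula n => fcode φ < fcode ψ := ⟨fun _ => lt_irrefl _⟩
  have : Std.Antisymm fun φ ψ : Formula n => fcode φ < fcode ψ :=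
    ⟨fun _ _ h h' => absurd (h.trans h') (lt_irrefl _)⟩
  exact List.Subset.antisymm_of_pairwise pairwise_normList pairwise_normList h₁ h₂

end NormList

lemma mem_neSubsets {n : ℕ} (B : {B : Finset (Fin n) // B.Nonempty}) : B ∈ neSubsets n := by
  have hinj : Function.Injective fun m : Fin (2 ^ n) => natToFinset n m := by
    intro m₁ m₂ h
    refine Fin.ext (Nat.eq_of_testBit_eq fun j => ?_)
    by_cases hj : j < n
    · simpa [natToFinset] using congrArg (⟨j, hj⟩ ∈ ·) h
    · have hle : 2 ^ n ≤ 2 ^ j := Nat.pow_le_pow_right two_pos (not_lt.1 hj)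
      rw [Nat.testBit_eq_false_of_lt (m₁.2.trans_le hle),
        Nat.testBit_eq_false_of_lt (m₂.2.trans_le hle)]
  obtain ⟨m, hm⟩ := ((Fintype.bijective_iff_injective_and_card _).2
    ⟨hinj, by simp [Fintype.card_finset]⟩).2 B.1
  simp only [neSubsets, List.mem_filterMap, List.mem_map, List.mem_range]
  exact ⟨B.1, ⟨m, m.2, hm⟩, by simp [B.2]⟩

section Canonical

variable {n : ℕ} {P : Finset ℕ}

def succFormulas (P : Finset ℕ) (l : ℕ) (c : CData n) (B : Finset (Fin n)) :
    List (Formula n) :=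
  normList ((c.succ B).map fun c' => toFormula P l c')

lemma toFormula_succ {l : ℕ} {c : CData n} :
    toFormula P (l + 1) c = .and (minterm P (c.S ∩ P))
      (bigAnd ((neSubsets n).map fun B => nabla B (succFormulas P l c B.1))) := rfl

lemma exists_eq_toFormula_of_mem_succFormulas {l : ℕ} {c : CData n} {B : Finset (Fin n)}
    {φ : Formula n} (h : φ ∈ succFormulas P l c B) : ∃ c', φ = toFormula P l c' := by
  obtain ⟨c', -, rfl⟩ := List.mem_map.1 (mem_of_mem_normList h)
  exact ⟨c', rfl⟩

lemma minterm_congr {S₁ S₂ : Finset ℕ} (h : ∀ q ∈ P, (q ∈ S₁ ↔ q ∈ S₂)) :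
    minterm (n := n) P S₁ = minterm P S₂ := by
  unfold minterm
  congr 1
  exact List.map_congr_left fun q hq => by simp only [h q ((Finset.mem_sort _).1 hq)]

variable {W : Type} {M : KModel n W} {w : W} {l : ℕ} {c : CData n}

lemma minterm_eq_of_sat {S₁ S₂ : Finset ℕ} (h₁ : Sat M w (minterm P S₁))
    (h₂ : Sat M w (minterm P S₂)) : minterm (n := n) P S₁ = minterm P S₂ :=
  minterm_congr fun q hq => (sat_minterm.1 h₁ q hq).symm.trans (sat_minterm.1 h₂ q hq)

lemma sat_bigAnd_map_neSubsets {f : {B : Finset (Fin n) // B.Nonempty} → Formula n} :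
    Sat M w (bigAnd ((neSubsets n).map f)) ↔ ∀ B, Sat M w (f B) := by
  simp only [sat_bigAnd, List.forall_mem_map]
  exact ⟨fun h B => h B (mem_neSubsets B), fun h B _ => h B⟩

lemma sat_toFormula_succ :
    Sat M w (toFormula P (l + 1) c) ↔ Sat M w (minterm P (c.S ∩ P)) ∧
      ∀ B : {B : Finset (Fin n) // B.Nonempty}, Sat M w (nabla B (succFormulas P l c B.1)) := by
  rw [toFormula_succ, Sat, sat_bigAnd_map_neSubsets]

lemma sat_elim_toFormula_succ {p : ℕ} :
    Sat M w (elim p (toFormula P (l + 1) c)) ↔ Sat M w (elim p (minterm P (c.S ∩ P))) ∧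
      ∀ B : {B : Finset (Fin n) // B.Nonempty},
        Sat M w (nabla B ((succFormulas P l c B.1).map (elim p))) := by
  rw [toFormula_succ, elim, Sat, elim_bigAnd, List.map_map, sat_bigAnd_map_neSubsets]
  refine and_congr_right' (forall_congr' fun B => ?_)
  rw [Function.comp_apply, elim_nabla]
  intro φ hφ
  obtain ⟨c', rfl⟩ := exists_eq_toFormula_of_mem_succFormulas hφ
  exact elim_neg_toFormula

lemma toFormula_eq_of_sat {c₁ c₂ : CData n} (h₁ : Sat M w (toFormula P l c₁))
    (h₂ : Sat M w (toFormula P l c₂)) : toFormula P l c₁ = toFormula P l c₂ := by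
  induction l generalizing w c₁ c₂ with
  | zero => exact minterm_eq_of_sat h₁ h₂
  | succ l ih =>
    have hsub : ∀ {c₁ c₂ : CData n}, Sat M w (toFormula P (l + 1) c₁) →
        Sat M w (toFormula P (l + 1) c₂) →
        ∀ B : {B : Finset (Fin n) // B.Nonempty},
          succFormulas P l c₁ B.1 ⊆ succFormulas P l c₂ B.1 := by
      intro c₁ c₂ h₁ h₂ B φ hφ
      obtain ⟨v, hv, hvφ⟩ := (sat_nabla.1 ((sat_toFormula_succ.1 h₁).2 B)).2 φ hφ
      obtain ⟨ψ, hψ, hvψ⟩ := (sat_nabla.1 ((sat_toFormula_succ.1 h₂).2 B)).1 v hv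
      obtain ⟨c, rfl⟩ := exists_eq_toFormula_of_mem_succFormulas hφ
      obtain ⟨c', rfl⟩ := exists_eq_toFormula_of_mem_succFormulas hψ
      rwa [ih hvφ hvψ]
    rw [toFormula_succ, toFormula_succ,
      minterm_eq_of_sat (sat_toFormula_succ.1 h₁).1 (sat_toFormula_succ.1 h₂).1]
    congr 2
    exact List.map_congr_left fun B _ =>
      congrArg (nabla B) (normList_eq_of_subset (hsub h₁ h₂ B) (hsub h₂ h₁ B))

end Canonical

section Construction

variable {n : ℕ} {WN W' : Type} (N : KModel n WN) (M' : KModel n W') (P : Finset ℕ) (p : ℕ)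

def Matched (t : WN) (u : W') (l : ℕ) : Prop :=
  ∃ c : CData n, Sat N t (toFormula P l c) ∧ Sat M' u (elim p (toFormula P l c))

/-- `.inl (t, u, l)` is a pair with `l` levels left to match, `.inr` a copy of `M'`, entered
where matching stops: at depth `0`, or from a pair agreeing on no canonical formula. -/
def prodModel : KModel n ((WN × W' × ℕ) ⊕ W') where
  R i x y :=
    match x, y with
    | .inl (t, u, l), .inl (t₂, v, m) =>
        m + 1 = l ∧ N.R i t t₂ ∧ M'.R i u v ∧ Matched N M' P p t₂ v m
    | .inl (t, u, l), .inr v => (l = 0 ∨ ¬ Matched N M' P p t u l) ∧ M'.R i u v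
    | .inr u, .inr v => M'.R i u v
    | .inr _, .inl _ => False
  V x :=
    match x with
    | .inl (t, u, _) => {q | if q = p then q ∈ N.V t else q ∈ M'.V u}
    | .inr u => M'.V u

variable {N M' P p} {B : Finset (Fin n)}

lemma prodModel_RB_inl_inl (hB : B.Nonempty) {t t₂ : WN} {u v : W'} {l m : ℕ} :
    (prodModel N M' P p).RB B (.inl (t, u, l)) (.inl (t₂, v, m)) ↔
      m + 1 = l ∧ N.RB B t t₂ ∧ M'.RB B u v ∧ Matched N M' P p t₂ v m := by
  obtain ⟨i, hi⟩ := hB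
  exact ⟨fun h => ⟨(h i hi).1, fun j hj => (h j hj).2.1, fun j hj => (h j hj).2.2.1, (h i hi).2.2.2⟩,
    fun ⟨h₁, h₂, h₃, h₄⟩ j hj => ⟨h₁, h₂ j hj, h₃ j hj, h₄⟩⟩

lemma prodModel_RB_inl_inr (hB : B.Nonempty) {t : WN} {u v : W'} {l : ℕ} :
    (prodModel N M' P p).RB B (.inl (t, u, l)) (.inr v) ↔
      (l = 0 ∨ ¬ Matched N M' P p t u l) ∧ M'.RB B u v := by
  obtain ⟨i, hi⟩ := hB
  exact ⟨fun h => ⟨(h i hi).1, fun j hj => (h j hj).2⟩, fun ⟨h₁, h₂⟩ j hj => ⟨h₁, h₂ j hj⟩⟩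

lemma not_prodModel_RB_inr_inl (hB : B.Nonempty) {u : W'} {y : WN × W' × ℕ} :
    ¬ (prodModel N M' P p).RB B (.inr u) (.inl y) := by
  obtain ⟨i, hi⟩ := hB
  exact fun h => h i hi

lemma sat_prodModel_minterm {S : Finset ℕ} {t : WN} {u : W'} {l : ℕ}
    (ht : Sat N t (minterm P S)) (hu : Sat M' u (elim p (minterm P S))) :
    Sat (prodModel N M' P p) (.inl (t, u, l)) (minterm P S) := by
  refine sat_minterm.2 fun q hq => ?_
  change (if q = p then q ∈ N.V t else q ∈ M'.V u) ↔ q ∈ S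
  split_ifs with hqp
  · exact sat_minterm.1 ht q hq
  · exact sat_elim_minterm.1 hu q hq hqp

variable {t : WN} {u : W'} {l : ℕ} {c : CData n}

lemma exists_succ_of_mem_succFormulas (ht : Sat N t (toFormula P (l + 1) c))
    (hu : Sat M' u (elim p (toFormula P (l + 1) c))) (B : {B : Finset (Fin n) // B.Nonempty})
    {φ : Formula n} (hφ : φ ∈ succFormulas P l c B.1) :
    ∃ t₂ v, N.RB B.1 t t₂ ∧ M'.RB B.1 u v ∧ Sat N t₂ φ ∧ Sat M' v (elim p φ) := by
  obtain ⟨t₂, ht₂, hφt₂⟩ := (sat_nabla.1 ((sat_toFormula_succ.1 ht).2 B)).2 φ hφ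
  obtain ⟨v, hv, hφv⟩ :=
    (sat_nabla.1 ((sat_elim_toFormula_succ.1 hu).2 B)).2 _ (List.mem_map_of_mem hφ)
  exact ⟨t₂, v, ht₂, hv, hφt₂, hφv⟩

lemma exists_matched_of_RB_right (ht : Sat N t (toFormula P (l + 1) c))
    (hu : Sat M' u (elim p (toFormula P (l + 1) c))) (B : {B : Finset (Fin n) // B.Nonempty})
    {v : W'} (hv : M'.RB B.1 u v) : ∃ t₂, N.RB B.1 t t₂ ∧ Matched N M' P p t₂ v l := by
  obtain ⟨_, hmem, hφv⟩ := (sat_nabla.1 ((sat_elim_toFormula_succ.1 hu).2 B)).1 v hv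
  obtain ⟨φ, hφ, rfl⟩ := List.mem_map.1 hmem
  obtain ⟨c', rfl⟩ := exists_eq_toFormula_of_mem_succFormulas hφ
  obtain ⟨t₂, ht₂, hφt₂⟩ := (sat_nabla.1 ((sat_toFormula_succ.1 ht).2 B)).2 _ hφ
  exact ⟨t₂, ht₂, c', hφt₂, hφv⟩

lemma sat_prodModel (ht : Sat N t (toFormula P l c)) (hu : Sat M' u (elim p (toFormula P l c))) :
    Sat (prodModel N M' P p) (.inl (t, u, l)) (toFormula P l c) := by
  induction l generalizing c t u with
  | zero => exact sat_prodModel_minterm ht hu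
  | succ l ih =>
    refine sat_toFormula_succ.2 ⟨sat_prodModel_minterm (sat_toFormula_succ.1 ht).1
      (sat_elim_toFormula_succ.1 hu).1, fun B => sat_nabla.2 ⟨?_, fun φ hφ => ?_⟩⟩
    · rintro (⟨t₂, v, m⟩ | v) hy
      · obtain ⟨hml, ht₂, -, c', hc't₂, hc'v⟩ := (prodModel_RB_inl_inl B.2).1 hy
        obtain rfl := Nat.succ_injective hml
        obtain ⟨φ, hφ, hφt₂⟩ := (sat_nabla.1 ((sat_toFormula_succ.1 ht).2 B)).1 t₂ ht₂
        obtain ⟨cφ, rfl⟩ := exists_eq_toFormula_of_mem_succFormulas hφ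
        rw [toFormula_eq_of_sat hc't₂ hφt₂] at hc'v
        exact ⟨_, hφ, ih hφt₂ hc'v⟩
      · obtain ⟨hl | hunmatched, -⟩ := (prodModel_RB_inl_inr B.2).1 hy
        · exact absurd hl l.succ_ne_zero
        · exact absurd ⟨c, ht, hu⟩ hunmatched
    · obtain ⟨t₂, v, ht₂, hv, hφt₂, hφv⟩ := exists_succ_of_mem_succFormulas ht hu B hφ
      obtain ⟨cφ, rfl⟩ := exists_eq_toFormula_of_mem_succFormulas hφ
      exact ⟨_, (prodModel_RB_inl_inl B.2).2 ⟨rfl, ht₂, hv, cφ, hφt₂, hφv⟩, ih hφt₂ hφv⟩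

lemma serial_prodModel (hN : ∀ i, Serial (N.R i)) (hM' : ∀ i, Serial (M'.R i)) (i : Fin n) :
    Serial ((prodModel N M' P p).R i) := by
  have hi : ({i} : Finset (Fin n)).Nonempty := Finset.singleton_nonempty i
  rintro (⟨t, u, _ | l⟩ | u)
  · obtain ⟨v, hv⟩ := hM' i u
    exact ⟨.inr v, Or.inl rfl, hv⟩
  · by_cases hm : Matched N M' P p t u (l + 1)
    · obtain ⟨c, ht, hu⟩ := hm
      obtain ⟨t₂, ht₂⟩ := hN i t
      obtain ⟨φ, hφ, -⟩ := (sat_nabla.1 ((sat_toFormula_succ.1 ht).2 ⟨{i}, hi⟩)).1 t₂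
        (by simpa [KModel.RB] using ht₂)
      obtain ⟨t₃, v, ht₃, hv, hφt₃, hφv⟩ := exists_succ_of_mem_succFormulas ht hu ⟨{i}, hi⟩ hφ
      obtain ⟨cφ, rfl⟩ := exists_eq_toFormula_of_mem_succFormulas hφ
      have hy := (prodModel_RB_inl_inl hi (P := P) (p := p)).2 ⟨rfl, ht₃, hv, cφ, hφt₃, hφv⟩
      exact ⟨_, hy i (Finset.mem_singleton_self i)⟩
    · obtain ⟨v, hv⟩ := hM' i u
      exact ⟨.inr v, Or.inr hm, hv⟩
  · obtain ⟨v, hv⟩ := hM' i u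
    exact ⟨.inr v, hv⟩

lemma collPBisim_prodModel {s' : W'} (hm : Matched N M' P p t s' l) :
    CollPBisim (prodModel N M' P p) (.inl (t, s', l)) M' s' p := by
  refine ⟨fun x u' =>
    match x with
    | .inl (t, u, l) => u' = u ∧ Matched N M' P p t u l
    | .inr u => u' = u, ⟨rfl, hm⟩, ?_⟩
  rintro (⟨t, u, l⟩ | u) u' hρ
  · obtain ⟨rfl, hm⟩ := hρ
    refine ⟨fun q hq => by simp [prodModel, hq], fun B hB y hy => ?_, fun B hB v hv => ?_⟩
    · rcases y with ⟨t₂, v, m⟩ | v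
      · obtain ⟨-, -, hv, hm₂⟩ := (prodModel_RB_inl_inl hB).1 hy
        exact ⟨v, hv, rfl, hm₂⟩
      · exact ⟨v, ((prodModel_RB_inl_inr hB).1 hy).2, rfl⟩
    · cases l with
      | zero => exact ⟨.inr v, (prodModel_RB_inl_inr hB).2 ⟨Or.inl rfl, hv⟩, rfl⟩
      | succ l =>
        obtain ⟨c, ht, hu⟩ := hm
        obtain ⟨t₂, ht₂, hm₂⟩ := exists_matched_of_RB_right ht hu ⟨B, hB⟩ hv
        exact ⟨.inl (t₂, v, l), (prodModel_RB_inl_inl hB).2 ⟨rfl, ht₂, hv, hm₂⟩, rfl, hm₂⟩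
  · subst hρ
    refine ⟨fun q _ => Iff.rfl, fun B hB y hy => ?_, fun B _ v hv => ⟨.inr v, hv, rfl⟩⟩
    rcases y with y | v
    · exact absurd hy (not_prodModel_RB_inr_inl hB)
    · exact ⟨v, hy, rfl⟩

end Construction

theorem construction_K_D_general {n : ℕ} (L : MSys) (hL : L = MSys.K ∨ L = MSys.D)
    (P : Finset ℕ) (p : ℕ) (k : ℕ) (d : CData n)
    (hδ : SatL L (cf P k d))
    (W' : Type) (M' : KModel n W') (s' : W') (hM' : IsModel L M')
    (hs' : Sat M' s' (elim p (cf P k d))) :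
    ∃ (W : Type) (M : KModel n W) (s : W),
      IsModel L M ∧ Sat M s (cf P k d) ∧ CollPBisim M s M' s' p := by
  obtain ⟨WN, N, t, hN, ht⟩ := hδ
  refine ⟨_, prodModel N M' P p, .inl (t, s', k), ?_, sat_prodModel ht hs',
    collPBisim_prodModel ⟨d, ht, hs'⟩⟩
  rcases hL with rfl | rfl
  · trivial
  · exact serial_prodModel hN hM'

/-- model construction for `K_n D` and `D_n D`. -/
theorem construction_K_D {n : ℕ} (L : MSys) (hL : L = MSys.K ∨ L = MSys.D)
    (P : Finset ℕ) (p : ℕ) (hp : p ∈ P) (k : ℕ) (d : CData n)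
    (hδ : SatL L (cf P k d))
    (W' : Type) (M' : KModel n W') (s' : W') (hM' : IsModel L M')
    (hs' : Sat M' s' (elim p (cf P k d))) :
    ∃ (W : Type) (M : KModel n W) (s : W),
      IsModel L M ∧ Sat M s (cf P k d) ∧ CollPBisim M s M' s' p :=
  construction_K_D_general L hL P p k d hδ W' M' s' hM' hs'

end DKLogic
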